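/- Let F be an algebraically closed field, n ≥ 1, and M a set of nilpotent n×n matrices that is conjugation-invariant and closed under taking linear spans of commuting pairs. If m ∈ ℕ belongs to the set Q_M of Jordan block sizes realized by single-block elements of M, then for every k ∈ {1,…,m}, both ⌊m/k⌋ and ⌈m/k⌉ belong to Q_M ∪ {1}. -/

import Mathlib

/-- The nilpotent Jordan block of size `m`. -/
def jordanBlock (F : Type*) [Field F] (m : ℕ) : Matrix (Fin m) (Fin m) F :=
  Matrix.of fun i j => if (j : ℕ) = (i : ℕ) + 1 then 1 else 0

/-- `m ∈ Q_M`: some matrix whose Jordan form consists of one block of size `m`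
(with `2 ≤ m ≤ n`) together with `n - m` blocks of size `1` belongs to `M`. -/
def memQM (F : Type*) [Field F] (n : ℕ) (M : Set (Matrix (Fin n) (Fin n) F))
    (m : ℕ) : Prop :=
  2 ≤ m ∧ m ≤ n ∧ ∃ X ∈ M, ∃ (e : (Fin m ⊕ Fin (n - m)) ≃ Fin n)
    (g : (Matrix (Fin n) (Fin n) F)ˣ),
    X = (g : Matrix (Fin n) (Fin n) F) *
      (Matrix.reindex e e (Matrix.fromBlocks (jordanBlock F m) 0 0 0)) *
      ((g⁻¹ : (Matrix (Fin n) (Fin n) F)ˣ) : Matrix (Fin n) (Fin n) F)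

namespace StmtAux

open Matrix

variable {F : Type*} [Field F]

def shiftW (F : Type*) [Field F] (m k : ℕ) (d : ℕ → F) : Matrix (Fin m) (Fin m) F :=
  Matrix.of fun i j => if (j : ℕ) = (i : ℕ) + k then d i else 0

lemma shiftW_apply (m k : ℕ) (d : ℕ → F) (i j : Fin m) :
    shiftW F m k d i j = if (j : ℕ) = (i : ℕ) + k then d (i : ℕ) else 0 := rfl

lemma sum_ite_coe {m : ℕ} (c : ℕ) (f : Fin m → F) :
    (∑ l : Fin m, if (l : ℕ) = c then f l else 0) =
      if h : c < m then f ⟨c, h⟩ else 0 := by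
  split
  · next h =>
      rw [Finset.sum_eq_single (⟨c, h⟩ : Fin m)]
      · simp
      · intro l _ hl
        rw [if_neg]
        simpa [Fin.ext_iff] using hl
      · simp
  · next h =>
      refine Finset.sum_eq_zero fun l _ => ?_
      rw [if_neg]
      intro hc
      exact h (hc ▸ l.isLt)

lemma shiftW_mul (m k k' : ℕ) (d d' : ℕ → F) :
    shiftW F m k d * shiftW F m k' d' =
      shiftW F m (k + k') (fun i => d i * d' (i + k)) := by
  ext i j
  rw [Matrix.mul_apply, shiftW_apply]
  have step : ∀ l : Fin m,
      shiftW F m k d i l * shiftW F m k' d' l j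
      = if (l : ℕ) = (i : ℕ) + k then
          (if (j : ℕ) = (i : ℕ) + k + k' then d (i : ℕ) * d' ((i : ℕ) + k) else 0) else 0 := by
    intro l
    rw [shiftW_apply, shiftW_apply]
    by_cases hl : (l : ℕ) = (i : ℕ) + k
    · rw [if_pos hl, if_pos hl, hl, mul_ite, mul_zero]
    · rw [if_neg hl, if_neg hl, zero_mul]
  rw [Finset.sum_congr rfl fun l _ => step l, sum_ite_coe]
  have hj := j.isLt
  split
  · next h => rw [add_assoc]
  · next h =>
      rw [if_neg]
      omega

lemma shiftW_zero_one (m : ℕ) : shiftW F m 0 (fun _ => (1 : F)) = 1 := by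
  ext i j
  rw [shiftW_apply, Matrix.one_apply]
  by_cases h : i = j
  · rw [if_pos (by rw [h]; omega), if_pos h]
  · rw [if_neg (fun hc => h (Fin.ext (by omega)).symm), if_neg h]

lemma jordanBlock_eq_shiftW (m : ℕ) :
    jordanBlock F m = shiftW F m 1 (fun _ => 1) := rfl

lemma jordan_pow (m p : ℕ) : (jordanBlock F m) ^ p = shiftW F m p (fun _ => 1) := by
  induction p with
  | zero => rw [pow_zero, shiftW_zero_one]
  | succ p ih =>
      rw [pow_succ, ih, jordanBlock_eq_shiftW, shiftW_mul]
      exact congrArg _ (funext fun i => one_mul 1)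

def polyJ (F : Type*) [Field F] (m : ℕ) (c : ℕ → F) : Matrix (Fin m) (Fin m) F :=
  Matrix.of fun i j => if (i : ℕ) ≤ (j : ℕ) then c ((j : ℕ) - (i : ℕ)) else 0

lemma polyJ_apply (m : ℕ) (c : ℕ → F) (i j : Fin m) :
    polyJ F m c i j = if (i : ℕ) ≤ (j : ℕ) then c ((j : ℕ) - (i : ℕ)) else 0 := rfl

lemma polyJ_mul (m : ℕ) (c c' : ℕ → F) :
    polyJ F m c * polyJ F m c' =
      polyJ F m (fun t => ∑ s ∈ Finset.range (t + 1), c s * c' (t - s)) := by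
  ext i j
  rw [Matrix.mul_apply, polyJ_apply]
  have hj := j.isLt
  have step : ∀ l : Fin m, polyJ F m c i l * polyJ F m c' l j
      = if (i : ℕ) ≤ (l : ℕ) ∧ (l : ℕ) ≤ (j : ℕ) then
          c ((l : ℕ) - (i : ℕ)) * c' ((j : ℕ) - (l : ℕ)) else 0 := by
    intro l
    rw [polyJ_apply, polyJ_apply]
    by_cases h1 : (i : ℕ) ≤ (l : ℕ)
    · by_cases h2 : (l : ℕ) ≤ (j : ℕ)
      · rw [if_pos h1, if_pos h2, if_pos ⟨h1, h2⟩]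
      · rw [if_pos h1, if_neg h2, mul_zero, if_neg (fun h => h2 h.2)]
    · rw [if_neg h1, zero_mul, if_neg (fun h => h1 h.1)]
  rw [Finset.sum_congr rfl fun l _ => step l]
  rw [Fin.sum_univ_eq_sum_range (fun t => if (i : ℕ) ≤ t ∧ t ≤ (j : ℕ) then
    c (t - (i : ℕ)) * c' ((j : ℕ) - t) else 0) m]
  rw [← Finset.sum_filter]
  have hfil : Finset.filter (fun t => (i : ℕ) ≤ t ∧ t ≤ (j : ℕ)) (Finset.range m)
      = Finset.Icc (i : ℕ) (j : ℕ) := by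
    ext t
    simp only [Finset.mem_filter, Finset.mem_range, Finset.mem_Icc]
    omega
  rw [hfil]
  by_cases hij : (i : ℕ) ≤ (j : ℕ)
  · rw [if_pos hij]
    refine Finset.sum_bij' (fun t _ => t - (i : ℕ)) (fun s _ => s + (i : ℕ)) ?_ ?_ ?_ ?_ ?_
    · intro t ht
      simp only [Finset.mem_Icc] at ht
      simp only [Finset.mem_range]
      omega
    · intro s hs
      simp only [Finset.mem_range] at hs
      simp only [Finset.mem_Icc]
      omega
    · intro t ht
      simp only [Finset.mem_Icc] at ht
      omega
    · intro s hs
      simp only [Finset.mem_range] at hs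
      omega
    · intro t ht
      simp only [Finset.mem_Icc] at ht
      rw [show (j : ℕ) - (i : ℕ) - (t - (i : ℕ)) = (j : ℕ) - t from by omega]
  · rw [if_neg hij, Finset.Icc_eq_empty (by omega), Finset.sum_empty]

lemma one_eq_polyJ (m : ℕ) :
    (1 : Matrix (Fin m) (Fin m) F) = polyJ F m (fun t => if t = 0 then 1 else 0) := by
  ext i j
  rw [Matrix.one_apply, polyJ_apply]
  by_cases h : i = j
  · rw [if_pos h, if_pos (by rw [h] : (i : ℕ) ≤ (j : ℕ)), if_pos (by rw [h]; omega)]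
  · rw [if_neg h]
    by_cases h2 : (i : ℕ) ≤ (j : ℕ)
    · rw [if_pos h2, if_neg]
      intro hc
      exact h (Fin.ext (by omega))
    · rw [if_neg h2]

lemma exists_polyJ_pow (m : ℕ) (X : Matrix (Fin m) (Fin m) F) (c : ℕ → F)
    (hc : c 0 = 1) (hX : X = polyJ F m c) (p : ℕ) :
    ∃ c' : ℕ → F, c' 0 = 1 ∧ X ^ p = polyJ F m c' := by
  induction p with
  | zero => exact ⟨fun t => if t = 0 then 1 else 0, by simp, by rw [pow_zero, one_eq_polyJ]⟩
  | succ p ih =>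
      obtain ⟨c', h0, hp⟩ := ih
      refine ⟨_, ?_, by rw [pow_succ, hp, hX, polyJ_mul]⟩
      simp [h0, hc]

lemma u_eq_polyJ (m k : ℕ) (hk : 2 ≤ k) :
    (1 : Matrix (Fin m) (Fin m) F) - (jordanBlock F m) ^ (k - 1)
      = polyJ F m (fun t => if t = 0 then 1 else if t = k - 1 then -1 else 0) := by
  have hk1 : k - 1 ≠ 0 := by omega
  ext i j
  rw [Matrix.sub_apply, Matrix.one_apply, jordan_pow, shiftW_apply, polyJ_apply]
  by_cases h2 : (i : ℕ) ≤ (j : ℕ)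
  · rw [if_pos h2]
    by_cases h : i = j
    · have hij : (i : ℕ) = (j : ℕ) := by rw [h]
      rw [if_pos h, if_neg (by omega : ¬ (j : ℕ) = (i : ℕ) + (k - 1)),
        if_pos (by omega : (j : ℕ) - (i : ℕ) = 0), sub_zero]
    · have hne : (j : ℕ) - (i : ℕ) ≠ 0 := by
        intro hc; exact h (Fin.ext (by omega))
      rw [if_neg h, if_neg hne, zero_sub]
      by_cases h3 : (j : ℕ) = (i : ℕ) + (k - 1)
      · rw [if_pos h3, if_pos (by omega)]
      · rw [if_neg h3, if_neg (by omega), neg_zero]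
  · rw [if_neg h2, if_neg (by omega : ¬ i = j), if_neg (by omega : ¬ (j : ℕ) = (i : ℕ) + (k - 1)), sub_zero]

lemma jordan_mul_apply (m : ℕ) (X : Matrix (Fin m) (Fin m) F) (i j : Fin m) :
    (jordanBlock F m * X) i j = if h : (i : ℕ) + 1 < m then X ⟨(i : ℕ) + 1, h⟩ j else 0 := by
  rw [Matrix.mul_apply]
  have step : ∀ l : Fin m, jordanBlock F m i l * X l j
      = if (l : ℕ) = (i : ℕ) + 1 then X l j else 0 := by
    intro l
    show (if (l : ℕ) = (i : ℕ) + 1 then (1 : F) else 0) * X l j = _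
    by_cases h : (l : ℕ) = (i : ℕ) + 1
    · rw [if_pos h, if_pos h, one_mul]
    · rw [if_neg h, if_neg h, zero_mul]
  rw [Finset.sum_congr rfl fun l _ => step l, sum_ite_coe]

lemma mul_jordan_apply (m : ℕ) (X : Matrix (Fin m) (Fin m) F) (i j : Fin m) :
    (X * jordanBlock F m) i j
      = if h : 1 ≤ (j : ℕ) then X i ⟨(j : ℕ) - 1, by omega⟩ else 0 := by
  rw [Matrix.mul_apply]
  have step : ∀ l : Fin m, X i l * jordanBlock F m l j
      = if (l : ℕ) = (j : ℕ) - 1 ∧ 1 ≤ (j : ℕ) then X i l else 0 := by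
    intro l
    show X i l * (if (j : ℕ) = (l : ℕ) + 1 then (1 : F) else 0) = _
    by_cases h : (j : ℕ) = (l : ℕ) + 1
    · rw [if_pos h, if_pos ⟨by omega, by omega⟩, mul_one]
    · rw [if_neg h, if_neg (by omega), mul_zero]
  rw [Finset.sum_congr rfl fun l _ => step l]
  by_cases hj : 1 ≤ (j : ℕ)
  · rw [dif_pos hj]
    have hlt : (j : ℕ) - 1 < m := by have := j.isLt; omega
    have step2 : ∀ l : Fin m, (if (l : ℕ) = (j : ℕ) - 1 ∧ 1 ≤ (j : ℕ) then X i l else 0)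
        = (if (l : ℕ) = (j : ℕ) - 1 then X i l else 0) := by
      intro l
      by_cases h : (l : ℕ) = (j : ℕ) - 1
      · rw [if_pos ⟨h, hj⟩, if_pos h]
      · rw [if_neg (fun hc => h hc.1), if_neg h]
    rw [Finset.sum_congr rfl fun l _ => step2 l,
      sum_ite_coe ((j : ℕ) - 1) (fun l => X i l), dif_pos hlt]
  · rw [dif_neg hj]
    refine Finset.sum_eq_zero fun l _ => ?_
    rw [if_neg (fun h => hj h.2)]

lemma smul_shiftW (m k : ℕ) (a : F) (d : ℕ → F) :
    a • shiftW F m k d = shiftW F m k (fun i => a * d i) := by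
  ext i j
  rw [Matrix.smul_apply, shiftW_apply, shiftW_apply, smul_eq_mul, mul_ite, mul_zero]

lemma engine {m : ℕ} (N : Set (Matrix (Fin m) (Fin m) F))
    (hconj : ∀ g : (Matrix (Fin m) (Fin m) F)ˣ, ∀ A ∈ N,
      (g : Matrix (Fin m) (Fin m) F) * A *
        ((g⁻¹ : (Matrix (Fin m) (Fin m) F)ˣ) : Matrix (Fin m) (Fin m) F) ∈ N)
    (hspan : ∀ A ∈ N, ∀ B ∈ N, Commute A B → ∀ a b : F, a • A + b • B ∈ N)
    (hJ : jordanBlock F m ∈ N) (k r0 : ℕ) (hk2 : 2 ≤ k) (hkm : k ≤ m) (hr0 : r0 < k)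
    (c0 : F) (hc0 : c0 ≠ 0) (hc1 : c0 ≠ 1) :
    shiftW F m k (fun i => if i % k = r0 then 1 else 0) ∈ N := by
  classical
  set J := jordanBlock F m with hJdef
  set u : Matrix (Fin m) (Fin m) F := 1 - J ^ (k - 1) with hu
  have hucomm : Commute J u :=
    (Commute.one_right J).sub_right (Commute.pow_right (Commute.refl J) _)
  have hexists : ∀ p, ∃ c' : ℕ → F, c' 0 = 1 ∧ u ^ p = polyJ F m c' := by
    intro p
    refine exists_polyJ_pow m u _ ?_ (u_eq_polyJ m k hk2) p
    simp
  choose C hC1 hC2 using hexists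
  set g : Matrix (Fin m) (Fin m) F :=
    Matrix.of (fun i a => polyJ F m (C (m - 1 - (a : ℕ))) i a) with hg
  have hg_apply : ∀ i a : Fin m, g i a = polyJ F m (C (m - 1 - (a : ℕ))) i a :=
    fun _ _ => rfl
  have hgu : IsUnit g := by
    rw [Matrix.isUnit_iff_isUnit_det, Matrix.det_of_upperTriangular]
    · have : ∀ i : Fin m, g i i = 1 := by
        intro i
        rw [hg_apply, polyJ_apply, if_pos le_rfl, Nat.sub_self, hC1]
      rw [Finset.prod_congr rfl fun i _ => this i, Finset.prod_const_one]
      exact isUnit_one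
    · intro i j hij
      rw [hg_apply, polyJ_apply, if_neg (by exact Nat.not_le.2 hij)]
  set U := hgu.unit with hU
  have hUg : (U : Matrix (Fin m) (Fin m) F) = g := hgu.unit_spec
  set B : Matrix (Fin m) (Fin m) F := J * u with hB
  have key : g * J = B * g := by
    ext i j
    rw [mul_jordan_apply]
    have hcol : (B * g) i j = (B * polyJ F m (C (m - 1 - (j : ℕ)))) i j := by
      rw [Matrix.mul_apply, Matrix.mul_apply]
      exact Finset.sum_congr rfl fun l _ => rfl
    rw [hcol]
    have hBu : B * polyJ F m (C (m - 1 - (j : ℕ)))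
        = J * polyJ F m (C (m - 1 - (j : ℕ) + 1)) := by
      rw [← hC2, ← hC2, hB, mul_assoc, ← pow_succ']
    rw [hBu, jordan_mul_apply]
    have hjm := j.isLt
    have him := i.isLt
    by_cases hj : 1 ≤ (j : ℕ)
    · rw [dif_pos hj, hg_apply, polyJ_apply]
      have hq : m - 1 - ((j : ℕ) - 1) = m - 1 - (j : ℕ) + 1 := by omega
      rw [hq]
      by_cases hi : (i : ℕ) + 1 < m
      · rw [dif_pos hi, polyJ_apply]
        by_cases hle : (i : ℕ) + 1 ≤ (j : ℕ)
        · rw [if_pos (show (i : ℕ) ≤ (j : ℕ) - 1 by omega), if_pos hle,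
            show (j : ℕ) - 1 - (i : ℕ) = (j : ℕ) - ((i : ℕ) + 1) from by omega]
        · rw [if_neg (show ¬ (i : ℕ) ≤ (j : ℕ) - 1 by omega), if_neg hle]
      · rw [dif_neg hi, if_neg (show ¬ (i : ℕ) ≤ (j : ℕ) - 1 from by omega)]
    · rw [dif_neg hj]
      by_cases hi : (i : ℕ) + 1 < m
      · rw [dif_pos hi, polyJ_apply,
          if_neg (show ¬ (i : ℕ) + 1 ≤ (j : ℕ) from by omega)]
      · rw [dif_neg hi]
  have hBN : B ∈ N := by
    have hmem := hconj U J hJ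
    have heq : (U : Matrix (Fin m) (Fin m) F) * J *
        ((U⁻¹ : (Matrix (Fin m) (Fin m) F)ˣ) : Matrix (Fin m) (Fin m) F) = B := by
      rw [Units.mul_inv_eq_iff_eq_mul, hUg]
      exact key
    rwa [heq] at hmem
  have hJB : Commute J B := (Commute.refl J).mul_right hucomm
  have hJk : J ^ k ∈ N := by
    have h := hspan J hJ B hBN hJB 1 (-1)
    have heq : (1 : F) • J + (-1 : F) • B = J ^ k := by
      rw [one_smul, neg_smul, one_smul, hB, hu, mul_sub, mul_one, ← pow_succ',
        Nat.sub_add_cancel (by omega : 1 ≤ k), ← sub_eq_add_neg, sub_sub_cancel]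
    rwa [heq] at h
  rw [hJdef, jordan_pow] at hJk
  set d : ℕ → F := fun i => if i % k = r0 then c0 else 1 with hd
  have hdne : ∀ i, d i ≠ 0 := by
    intro i
    rw [hd]
    dsimp only
    split_ifs
    · exact hc0
    · exact one_ne_zero
  have hdper : ∀ i, d (i + k) = d i := by
    intro i
    rw [hd]
    dsimp only
    rw [Nat.add_mod_right]
  set γ : ℕ → F := fun i => d i ^ (m / k + 1 - i / k) with hγ
  have hγne : ∀ i, γ i ≠ 0 := fun i => pow_ne_zero _ (hdne i)
  have hDval : Matrix.diagonal (fun i : Fin m => γ (i : ℕ)) *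
      Matrix.diagonal (fun i : Fin m => (γ (i : ℕ))⁻¹) = 1 := by
    rw [Matrix.diagonal_mul_diagonal]
    have : (fun i : Fin m => γ (i : ℕ) * (γ (i : ℕ))⁻¹) = fun _ => (1 : F) :=
      funext fun i => mul_inv_cancel₀ (hγne _)
    rw [this, Matrix.diagonal_one]
  have hDval' : Matrix.diagonal (fun i : Fin m => (γ (i : ℕ))⁻¹) *
      Matrix.diagonal (fun i : Fin m => γ (i : ℕ)) = 1 := by
    rw [Matrix.diagonal_mul_diagonal]
    have : (fun i : Fin m => (γ (i : ℕ))⁻¹ * γ (i : ℕ)) = fun _ => (1 : F) :=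
      funext fun i => inv_mul_cancel₀ (hγne _)
    rw [this, Matrix.diagonal_one]
  set U2 : (Matrix (Fin m) (Fin m) F)ˣ :=
    ⟨Matrix.diagonal (fun i : Fin m => γ (i : ℕ)),
     Matrix.diagonal (fun i : Fin m => (γ (i : ℕ))⁻¹), hDval, hDval'⟩ with hU2
  have hkey2 : Matrix.diagonal (fun i : Fin m => γ (i : ℕ)) * shiftW F m k (fun _ => 1)
      = shiftW F m k d * Matrix.diagonal (fun i : Fin m => γ (i : ℕ)) := by
    ext i j
    rw [Matrix.diagonal_mul, Matrix.mul_diagonal, shiftW_apply, shiftW_apply]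
    by_cases hcond : (j : ℕ) = (i : ℕ) + k
    · rw [if_pos hcond, if_pos hcond, mul_one]
      have hjm := j.isLt
      have hdiv : (i : ℕ) / k ≤ m / k := Nat.div_le_div_right (by omega)
      have hdiv2 : ((i : ℕ) + k) / k = (i : ℕ) / k + 1 :=
        Nat.add_div_right _ (by omega)
      rw [hγ]
      dsimp only
      rw [hcond, hdper, hdiv2,
        show m / k + 1 - (i : ℕ) / k = (m / k + 1 - ((i : ℕ) / k + 1)) + 1 from by omega,
        pow_succ]
      ring
    · rw [if_neg hcond, if_neg hcond, mul_zero, zero_mul]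
  have hC' : shiftW F m k d ∈ N := by
    have hmem := hconj U2 _ hJk
    have heq : (U2 : Matrix (Fin m) (Fin m) F) * shiftW F m k (fun _ => 1) *
        ((U2⁻¹ : (Matrix (Fin m) (Fin m) F)ˣ) : Matrix (Fin m) (Fin m) F)
        = shiftW F m k d := by
      rw [Units.mul_inv_eq_iff_eq_mul]
      exact hkey2.trans rfl
    rwa [heq] at hmem
  have hcomm2 : Commute (shiftW F m k (fun _ => 1)) (shiftW F m k d) := by
    show _ * _ = _ * _
    rw [shiftW_mul, shiftW_mul]
    exact congrArg _ (funext fun i => by rw [hdper, one_mul, mul_one])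
  have hD := hspan _ hJk _ hC' hcomm2 1 (-1)
  have hDeq : (1 : F) • shiftW F m k (fun _ => 1) + (-1 : F) • shiftW F m k d
      = shiftW F m k (fun i => 1 - d i) := by
    rw [one_smul, neg_smul, one_smul, ← sub_eq_add_neg]
    ext i j
    rw [Matrix.sub_apply, shiftW_apply, shiftW_apply, shiftW_apply]
    split_ifs
    · rfl
    · rw [sub_zero]
  rw [hDeq] at hD
  have hsc := hspan _ hD _ hD (Commute.refl _) (1 - c0)⁻¹ 0
  have hfin : (1 - c0)⁻¹ • shiftW F m k (fun i => 1 - d i)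
      + (0 : F) • shiftW F m k (fun i => 1 - d i)
      = shiftW F m k (fun i => if i % k = r0 then 1 else 0) := by
    rw [zero_smul, add_zero, smul_shiftW]
    refine congrArg _ (funext fun i => ?_)
    rw [hd]
    dsimp only
    split_ifs
    · rw [inv_mul_cancel₀ (sub_ne_zero_of_ne (Ne.symm hc1))]
    · rw [sub_self, mul_zero]
  rwa [hfin] at hsc

lemma jordanBlock_apply (m : ℕ) (i j : Fin m) :
    jordanBlock F m i j = if (j : ℕ) = (i : ℕ) + 1 then 1 else 0 := rfl

lemma buildQM (n m k r0 : ℕ) (M : Set (Matrix (Fin n) (Fin n) F))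
    (e : Fin m ⊕ Fin (n - m) ≃ Fin n)
    (hr0 : r0 < k) (hkm : k ≤ m) (hmn : m ≤ n)
    (hq2 : 2 ≤ (m - r0 + k - 1) / k)
    (hmem : (Matrix.reindex e e (Matrix.fromBlocks
        (shiftW F m k (fun i => if i % k = r0 then 1 else 0)) 0 0 0)) ∈ M) :
    memQM F n M ((m - r0 + k - 1) / k) := by
  classical
  set χ : ℕ → F := fun i => if i % k = r0 then 1 else 0 with hχ
  set q := (m - r0 + k - 1) / k with hq
  have hkpos : 0 < k := by omega
  have hq_iff : ∀ s : ℕ, s < q ↔ r0 + s * k < m := by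
    intro s
    rw [hq]
    constructor
    · intro hs
      have h2 : (s + 1) * k ≤ m - r0 + k - 1 := (Nat.le_div_iff_mul_le hkpos).1 hs
      rw [add_one_mul] at h2
      omega
    · intro hs
      refine (Nat.le_div_iff_mul_le hkpos).2 ?_
      rw [Nat.succ_mul]
      omega
  have hq1 : 1 ≤ q := (hq_iff 0).2 (by omega)
  have hqm : q ≤ m := by
    have h1 := (hq_iff (q - 1)).1 (by omega)
    have h2 : q - 1 ≤ (q - 1) * k := Nat.le_mul_of_pos_right _ hkpos
    omega
  have hlt : ∀ a : Fin q, r0 + (a : ℕ) * k < m := fun a => (hq_iff a).1 a.isLt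
  set f : Fin q → Fin n := fun a => e (Sum.inl ⟨r0 + (a : ℕ) * k, hlt a⟩) with hf
  have hfinj : Function.Injective f := by
    intro a b hab
    have h1 := e.injective hab
    rw [Sum.inl.injEq, Fin.mk.injEq] at h1
    have : (a : ℕ) * k = (b : ℕ) * k := by omega
    exact Fin.ext (Nat.eq_of_mul_eq_mul_right hkpos this)
  have hcard : Fintype.card ↥(Set.range f)ᶜ = n - q := by
    rw [Fintype.card_compl_set, Set.card_range_of_injective hfinj]
    simp
  set φ : Fin (n - q) ≃ ↥(Set.range f)ᶜ :=
    (Fintype.equivFinOfCardEq hcard).symm with hφ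
  set e'' : Fin q ⊕ Fin (n - q) ≃ Fin n :=
    (Equiv.sumCongr (Equiv.ofInjective f hfinj) φ).trans
      (Equiv.Set.sumCompl (Set.range f)) with he''
  have he1 : ∀ a, e'' (Sum.inl a) = f a := by
    intro a
    rw [he'']
    simp [Equiv.Set.sumCompl_apply_inl]
  have he2 : ∀ b, e'' (Sum.inr b) ∉ Set.range f := by
    intro b
    rw [he'']
    simp only [Equiv.trans_apply, Equiv.sumCongr_apply, Sum.map_inr,
      Equiv.Set.sumCompl_apply_inr]
    exact (φ b).2
  have hchain : ∀ c : Fin m, (c : ℕ) % k = r0 → e (Sum.inl c) ∈ Set.range f := by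
    intro c hc
    have hdm : k * ((c : ℕ) / k) + (c : ℕ) % k = c := Nat.div_add_mod _ _
    rw [Nat.mul_comm] at hdm
    have hcv : r0 + ((c : ℕ) / k) * k = (c : ℕ) := by omega
    have hlt' : (c : ℕ) / k < q := (hq_iff _).2 (by rw [hcv]; exact c.isLt)
    refine ⟨⟨(c : ℕ) / k, hlt'⟩, ?_⟩
    rw [hf]
    exact congrArg e (congrArg Sum.inl (Fin.ext hcv))
  set S := shiftW F m k χ with hS
  have hrow0 : ∀ c : Fin m, e (Sum.inl c) ∉ Set.range f → ∀ z, S c z = 0 := by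
    intro c hcnot z
    rw [hS, shiftW_apply, hχ]
    dsimp only
    split_ifs with h1 h2
    · exact absurd (hchain c h2) hcnot
    · rfl
    · rfl
  have hcol0 : ∀ c : Fin m, e (Sum.inl c) ∉ Set.range f → ∀ z : Fin m, S z c = 0 := by
    intro c hcnot z
    rw [hS, shiftW_apply, hχ]
    dsimp only
    split_ifs with h1 h2
    · exfalso
      apply hcnot
      apply hchain
      rw [h1, Nat.add_mod_right, h2]
    · rfl
    · rfl
  have hmx : Matrix.reindex e e (Matrix.fromBlocks S 0 0 0)
      = Matrix.reindex e'' e'' (Matrix.fromBlocks (jordanBlock F q) 0 0 0) := by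
    ext i j
    obtain ⟨x, rfl⟩ := e''.surjective i
    obtain ⟨y, rfl⟩ := e''.surjective j
    rw [Matrix.reindex_apply, Matrix.reindex_apply, Matrix.submatrix_apply,
      Matrix.submatrix_apply, Equiv.symm_apply_apply, Equiv.symm_apply_apply]
    match x, y with
    | Sum.inl a, Sum.inl a' =>
        rw [he1, he1, hf]
        dsimp only
        rw [Equiv.symm_apply_apply, Equiv.symm_apply_apply,
          Matrix.fromBlocks_apply₁₁, Matrix.fromBlocks_apply₁₁, hS, shiftW_apply,
          jordanBlock_apply, hχ]
        dsimp only
        by_cases hcase : (a' : ℕ) = (a : ℕ) + 1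
        · rw [if_pos hcase,
            if_pos (show r0 + (a' : ℕ) * k = r0 + (a : ℕ) * k + k from by rw [hcase]; ring),
            if_pos (by rw [Nat.add_mul_mod_self_right, Nat.mod_eq_of_lt hr0])]
        · rw [if_neg hcase, if_neg]
          intro hcc
          have : (a' : ℕ) * k = ((a : ℕ) + 1) * k := by rw [add_one_mul]; omega
          exact hcase (Nat.eq_of_mul_eq_mul_right hkpos this)
    | Sum.inl a, Sum.inr b =>
        rw [he1, hf]
        dsimp only
        rw [Equiv.symm_apply_apply]
        rcases hsc : e.symm (e'' (Sum.inr b)) with c | c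
        · rw [Matrix.fromBlocks_apply₁₁, Matrix.fromBlocks_apply₁₂, Matrix.zero_apply]
          have hee : e (Sum.inl c) = e'' (Sum.inr b) := by
            rw [← hsc, Equiv.apply_symm_apply]
          exact hcol0 c (hee ▸ he2 b) _
        · rw [Matrix.fromBlocks_apply₁₂, Matrix.fromBlocks_apply₁₂,
            Matrix.zero_apply, Matrix.zero_apply]
    | Sum.inr b, y =>
        have hrzero : ∀ z, Matrix.fromBlocks S (0 : Matrix (Fin m) (Fin (n - m)) F)
            (0 : Matrix (Fin (n - m)) (Fin m) F) (0 : Matrix (Fin (n - m)) (Fin (n - m)) F)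
            (e.symm (e'' (Sum.inr b))) z = 0 := by
          intro z
          rcases hsc : e.symm (e'' (Sum.inr b)) with c | c
          · have hee : e (Sum.inl c) = e'' (Sum.inr b) := by
              rw [← hsc, Equiv.apply_symm_apply]
            rcases z with cz | cz
            · rw [Matrix.fromBlocks_apply₁₁]
              exact hrow0 c (hee ▸ he2 b) _
            · rw [Matrix.fromBlocks_apply₁₂, Matrix.zero_apply]
          · rcases z with cz | cz
            · rw [Matrix.fromBlocks_apply₂₁, Matrix.zero_apply]
            · rw [Matrix.fromBlocks_apply₂₂, Matrix.zero_apply]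
        rw [hrzero]
        rcases y with cy | cy
        · rw [Matrix.fromBlocks_apply₂₁, Matrix.zero_apply]
        · rw [Matrix.fromBlocks_apply₂₂, Matrix.zero_apply]
  refine ⟨hq2, le_trans hqm hmn, _, hmem, e'', 1, ?_⟩
  rw [← hS] at *
  rw [hmx]
  simp

end StmtAux

open StmtAux in
/-- Corollary 3.2: if `M` is a conjugation-invariant set of nilpotent matrices,
closed under taking linear spans of commuting pairs, then `m ∈ Q_M` implies
`⌊m/k⌋ ∈ Q_M ∪ {1}` and `⌈m/k⌉ ∈ Q_M ∪ {1}` for every `k ∈ {1, …, m}`. -/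
theorem stmt19 (F : Type*) [Field F] [IsAlgClosed F] (n : ℕ)
    (M : Set (Matrix (Fin n) (Fin n) F))
    (hnil : ∀ X ∈ M, IsNilpotent X)
    (hconj : ∀ g : (Matrix (Fin n) (Fin n) F)ˣ, ∀ A ∈ M,
      (g : Matrix (Fin n) (Fin n) F) * A *
        ((g⁻¹ : (Matrix (Fin n) (Fin n) F)ˣ) : Matrix (Fin n) (Fin n) F) ∈ M)
    (hspan : ∀ A ∈ M, ∀ B ∈ M, Commute A B → ∀ a b : F, a • A + b • B ∈ M)
    (m : ℕ) (hmQ : memQM F n M m) (k : ℕ) (hk1 : 1 ≤ k) (hkm : k ≤ m) :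
    (m / k = 1 ∨ memQM F n M (m / k)) ∧
    ((m + k - 1) / k = 1 ∨ memQM F n M ((m + k - 1) / k)) := by

  classical
  obtain ⟨hm2, hmn, X, hXM, e, g, hXeq⟩ := hmQ
  by_cases hk : k = 1
  · subst hk
    constructor
    · right
      rw [Nat.div_one]
      exact ⟨hm2, hmn, X, hXM, e, g, hXeq⟩
    · right
      rw [Nat.add_sub_cancel, Nat.div_one]
      exact ⟨hm2, hmn, X, hXM, e, g, hXeq⟩
  have hk2 : 2 ≤ k := by omega
  set R := Matrix.reindex e e (Matrix.fromBlocks (jordanBlock F m) 0 0 0) with hR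
  have hRM : R ∈ M := by
    have h := hconj g⁻¹ X hXM
    rw [hXeq, inv_inv] at h
    rwa [mul_assoc (g : Matrix (Fin n) (Fin n) F) R, Units.inv_mul_cancel_left,
      Units.inv_mul_cancel_right] at h
  set Φ : Matrix (Fin m) (Fin m) F → Matrix (Fin n) (Fin n) F :=
    fun A => Matrix.reindex e e (Matrix.fromBlocks A 0 0 0) with hΦ
  set Ψ : Matrix (Fin m) (Fin m) F → Matrix (Fin n) (Fin n) F :=
    fun A => Matrix.reindex e e (Matrix.fromBlocks A 0 0 1) with hΨ
  have hΨmul : ∀ A B : Matrix (Fin m) (Fin m) F, Ψ A * Ψ B = Ψ (A * B) := by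
    intro A B
    rw [hΨ]
    dsimp only
    rw [Matrix.reindex_apply, Matrix.reindex_apply, Matrix.reindex_apply,
      Matrix.submatrix_mul_equiv, Matrix.fromBlocks_multiply]
    simp
  have hΨone : Ψ 1 = 1 := by
    rw [hΨ]
    dsimp only
    rw [Matrix.fromBlocks_one, Matrix.reindex_apply, Matrix.submatrix_one_equiv]
  have hΨΦ : ∀ A B : Matrix (Fin m) (Fin m) F, Ψ A * Φ B = Φ (A * B) := by
    intro A B
    rw [hΨ, hΦ]
    dsimp only
    rw [Matrix.reindex_apply, Matrix.reindex_apply, Matrix.reindex_apply,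
      Matrix.submatrix_mul_equiv, Matrix.fromBlocks_multiply]
    simp
  have hΦΨ : ∀ A B : Matrix (Fin m) (Fin m) F, Φ A * Ψ B = Φ (A * B) := by
    intro A B
    rw [hΨ, hΦ]
    dsimp only
    rw [Matrix.reindex_apply, Matrix.reindex_apply, Matrix.reindex_apply,
      Matrix.submatrix_mul_equiv, Matrix.fromBlocks_multiply]
    simp
  have hΦmul : ∀ A B : Matrix (Fin m) (Fin m) F, Φ A * Φ B = Φ (A * B) := by
    intro A B
    rw [hΦ]
    dsimp only
    rw [Matrix.reindex_apply, Matrix.reindex_apply, Matrix.reindex_apply,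
      Matrix.submatrix_mul_equiv, Matrix.fromBlocks_multiply]
    simp
  set N : Set (Matrix (Fin m) (Fin m) F) := {A | Φ A ∈ M} with hN
  have hJN : jordanBlock F m ∈ N := hRM
  have hconjN : ∀ u : (Matrix (Fin m) (Fin m) F)ˣ, ∀ A ∈ N,
      (u : Matrix (Fin m) (Fin m) F) * A *
        ((u⁻¹ : (Matrix (Fin m) (Fin m) F)ˣ) : Matrix (Fin m) (Fin m) F) ∈ N := by
    intro u A hA
    set U : (Matrix (Fin n) (Fin n) F)ˣ :=
      ⟨Ψ (u : Matrix (Fin m) (Fin m) F),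
       Ψ ((u⁻¹ : (Matrix (Fin m) (Fin m) F)ˣ) : Matrix (Fin m) (Fin m) F),
       by rw [hΨmul, Units.mul_inv, hΨone],
       by rw [hΨmul, Units.inv_mul, hΨone]⟩ with hU
    have h := hconj U (Φ A) hA
    have heq : (U : Matrix (Fin n) (Fin n) F) * Φ A *
        ((U⁻¹ : (Matrix (Fin n) (Fin n) F)ˣ) : Matrix (Fin n) (Fin n) F)
        = Φ ((u : Matrix (Fin m) (Fin m) F) * A *
            ((u⁻¹ : (Matrix (Fin m) (Fin m) F)ˣ) : Matrix (Fin m) (Fin m) F)) := by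
      show Ψ _ * Φ A * Ψ _ = _
      rw [hΨΦ, hΦΨ]
    rwa [heq] at h
  have hspanN : ∀ A ∈ N, ∀ B ∈ N, Commute A B → ∀ a b : F, a • A + b • B ∈ N := by
    intro A hA B hB hAB a b
    have hcomm : Commute (Φ A) (Φ B) := by
      show Φ A * Φ B = Φ B * Φ A
      rw [hΦmul, hΦmul, hAB.eq]
    have h := hspan (Φ A) hA (Φ B) hB hcomm a b
    have heq : a • Φ A + b • Φ B = Φ (a • A + b • B) := by
      rw [hΦ]
      dsimp only
      rw [Matrix.reindex_apply, Matrix.reindex_apply, Matrix.reindex_apply]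
      ext i j
      rcases hx : e.symm i with x | x <;> rcases hy : e.symm j with y | y <;>
        simp [Matrix.submatrix_apply, hx, hy, Matrix.add_apply, Matrix.smul_apply,
          smul_eq_mul]
    rwa [heq] at h
  obtain ⟨c0, hc0mem⟩ := Infinite.exists_notMem_finset ({0, 1} : Finset F)
  simp only [Finset.mem_insert, Finset.mem_singleton, not_or] at hc0mem
  obtain ⟨hc0, hc1⟩ := hc0mem
  constructor
  · rcases Nat.lt_or_ge (m / k) 2 with h | h
    · left
      have h1 : 1 ≤ m / k := (Nat.one_le_div_iff (by omega)).2 hkm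
      omega
    · right
      have hfloor := engine N hconjN hspanN hJN k (k - 1) hk2 hkm (by omega) c0 hc0 hc1
      have harith : (m - (k - 1) + k - 1) / k = m / k := by
        congr 1
        omega
      have hb := buildQM n m k (k - 1) M e (by omega) hkm hmn
        (by rw [harith]; exact h) hfloor
      rwa [harith] at hb
  · rcases Nat.lt_or_ge ((m + k - 1) / k) 2 with h | h
    · left
      have h1 : 1 ≤ (m + k - 1) / k := (Nat.one_le_div_iff (by omega)).2 (by omega)
      omega
    · right
      have hceil := engine N hconjN hspanN hJN k 0 hk2 hkm (by omega) c0 hc0 hc1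
      have harith : (m - 0 + k - 1) / k = (m + k - 1) / k := by
        rw [Nat.sub_zero]
      have hb := buildQM n m k 0 M e (by omega) hkm hmn
        (by rw [harith]; exact h) hceil
      rwa [harith] at hb
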